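/- arXiv:1210.7220 — 3 statements merged into one kernel-verified Lean document; each statement's English description precedes it below -/
import Mathlib

section
/- In the setting of the preceding proposition (assumptions (A1)–(A5), (A6)₊, fixed (η,θ) ∈ (0,η₀)×(1,θ₀) with ψ = ψ(η,θ) > 0, and w(x,t) = sup_{s ≥ t} [u(x,t) − v₀(x) − θ(u(x,s) − v₀(x) + η(s−t))] where u is the Lipschitz periodic solution of (CP) and v₀ a Lipschitz periodic solution of H(x,Dv₀)=0 with 0 ≤ u − v₀ ≤ C₀): one has limsup_{t→∞} w(x,t) ≤ 0 for all x ∈ ℝⁿ, and moreover max{w(x,t), 0} → 0 as t → ∞ uniformly in x ∈ ℝⁿ. -/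
/-!
Fix `δ > 0` and compare `w` with the time weight `χ(t) = C₀ + δ - ψ (t - t₀) / 2`, cut off by a
C¹ barrier shortly after the time `t₀ + τ` of interest. If `w(x₀, t₀ + τ) > χ(t₀ + τ)`, maximize
the doubled functional `u(x,t) + (θ-1) v₀(y) - θ u(z,s) - θη(s-t) - α|x-y|² - α|x-z|² - χ(t)`
over `s ≥ t`: periodicity makes the maximum attained, and `0 ≤ u - v₀ ≤ C₀` puts it in the
interior. The subsolution property of `v₀` at `y`, the supersolution property of `u` at `(z,s)`
and the subsolution property of `u` at `(x,t)` give `p`, `q` with `H(y,p) ≤ 0`, `H(z,q) ≥ η`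
and `H(x, p + θ(q-p)) ≤ θη + ψ/2`; the Lipschitz bounds keep `p`, `q` bounded and make
`|x-y|, |x-z| = O(1/α)`. Letting `α → ∞` along a convergent subsequence contradicts (A6)₊.
Hence `w(·, t₀ + τ) ≤ C₀ + δ - ψτ/2` whenever the right side exceeds `δ/2`, and this bound
drops below any `ε > 0` after a time independent of `x`.
-/

noncomputable section

open Filter Set Topology

namespace HJpaper

/-- Points of `ℝⁿ` (with the Euclidean norm). -/
abbrev E (n : ℕ) := EuclideanSpace ℝ (Fin n)

/-- The vector of `ℝⁿ` with integer coordinates `k`. -/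
def lat (n : ℕ) (k : Fin n → ℤ) : E n :=
  (WithLp.equiv 2 (Fin n → ℝ)).symm fun i => (k i : ℝ)

/-- `f : ℝⁿ → ℝ` is `ℤⁿ`-periodic. -/
def Per {n : ℕ} (f : E n → ℝ) : Prop :=
  ∀ (x : E n) (k : Fin n → ℤ), f (x + lat n k) = f x

/-- (A2): continuity of the Hamiltonian. -/
def ContH {n : ℕ} (H : E n → E n → ℝ) : Prop :=
  Continuous fun q : E n × E n => H q.1 q.2

/-- (A3): `ℤⁿ`-periodicity of the Hamiltonian in `x`. -/
def PerH {n : ℕ} (H : E n → E n → ℝ) : Prop :=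
  ∀ p : E n, Per fun x => H x p

/-- (A4): coercivity of the Hamiltonian. -/
def Coercive {n : ℕ} (H : E n → E n → ℝ) : Prop :=
  ∀ M : ℝ, ∃ r : ℝ, ∀ x p : E n, r ≤ ‖p‖ → M ≤ H x p

/-- viscosity subsolution of `u_t + H(x, D_x u) = 0` in `Q = ℝⁿ × (0,∞)`. -/
def CPSub {n : ℕ} (H : E n → E n → ℝ) (u : E n → ℝ → ℝ) : Prop :=
  ∀ φ : E n → ℝ → ℝ, ContDiff ℝ 1 (fun q : E n × ℝ => φ q.1 q.2) →
    ∀ (x : E n) (t : ℝ), 0 < t →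
      IsLocalMaxOn (fun q : E n × ℝ => u q.1 q.2 - φ q.1 q.2)
        {q : E n × ℝ | 0 < q.2} (x, t) →
      deriv (fun s => φ x s) t + H x (gradient (fun y => φ y t) x) ≤ 0

/-- viscosity supersolution of `u_t + H(x, D_x u) = 0` in `Q = ℝⁿ × (0,∞)`. -/
def CPSuper {n : ℕ} (H : E n → E n → ℝ) (u : E n → ℝ → ℝ) : Prop :=
  ∀ φ : E n → ℝ → ℝ, ContDiff ℝ 1 (fun q : E n × ℝ => φ q.1 q.2) →
    ∀ (x : E n) (t : ℝ), 0 < t →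
      IsLocalMinOn (fun q : E n × ℝ => u q.1 q.2 - φ q.1 q.2)
        {q : E n × ℝ | 0 < q.2} (x, t) →
      0 ≤ deriv (fun s => φ x s) t + H x (gradient (fun y => φ y t) x)

/-- viscosity solution of `u_t + H(x, D_x u) = 0` in `Q`. -/
def CPSol {n : ℕ} (H : E n → E n → ℝ) (u : E n → ℝ → ℝ) : Prop :=
  CPSub H u ∧ CPSuper H u

/-- `u` is a solution of the Cauchy problem (CP) for the data `u₀`: it is uniformly
continuous on `ℝⁿ × [0,∞)`, `ℤⁿ`-periodic in `x`, a viscosity solution of the PDE in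
`Q = ℝⁿ × (0,∞)`, and attains the initial data (continuously, by uniform continuity). -/
def IsCP {n : ℕ} (H : E n → E n → ℝ) (u₀ : E n → ℝ) (u : E n → ℝ → ℝ) : Prop :=
  UniformContinuousOn (fun q : E n × ℝ => u q.1 q.2) {q : E n × ℝ | 0 ≤ q.2} ∧
  (∀ t : ℝ, 0 ≤ t → Per fun x => u x t) ∧
  CPSol H u ∧
  ∀ x : E n, u x 0 = u₀ x

/-- viscosity subsolution of `H(x, Dv(x)) ≤ g(x)` in `ℝⁿ`. -/
def StatSub {n : ℕ} (H : E n → E n → ℝ) (g : E n → ℝ) (v : E n → ℝ) : Prop :=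
  ∀ φ : E n → ℝ, ContDiff ℝ 1 φ →
    ∀ x : E n, IsLocalMax (fun y => v y - φ y) x → H x (gradient φ x) ≤ g x

/-- viscosity supersolution of `H(x, Dv(x)) ≥ g(x)` in `ℝⁿ`. -/
def StatSuper {n : ℕ} (H : E n → E n → ℝ) (g : E n → ℝ) (v : E n → ℝ) : Prop :=
  ∀ φ : E n → ℝ, ContDiff ℝ 1 φ →
    ∀ x : E n, IsLocalMin (fun y => v y - φ y) x → g x ≤ H x (gradient φ x)

/-- viscosity solution of `H(x, Dv(x)) = c` in `ℝⁿ`. -/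
def StatSol {n : ℕ} (H : E n → E n → ℝ) (c : ℝ) (v : E n → ℝ) : Prop :=
  StatSub H (fun _ => c) v ∧ StatSuper H (fun _ => c) v

/-- Lipschitz continuity (with some constant). -/
def IsLip {n : ℕ} (f : E n → ℝ) : Prop := ∃ K : NNReal, LipschitzWith K f

/-- (A5): the additive eigenvalue is zero, i.e. `H(x,Dv)=0` has a Lipschitz
`ℤⁿ`-periodic viscosity solution. -/
def A5 {n : ℕ} (H : E n → E n → ℝ) : Prop :=
  ∃ v : E n → ℝ, IsLip v ∧ Per v ∧ StatSol H 0 v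

/-- condition (A6)₊. -/
def A6plus {n : ℕ} (H : E n → E n → ℝ) : Prop :=
  ∃ η₀ > (0:ℝ), ∃ θ₀ > (1:ℝ),
    ∀ η ∈ Set.Ioo (0:ℝ) η₀, ∀ θ ∈ Set.Ioo (1:ℝ) θ₀, ∃ ψ > (0:ℝ),
      ∀ x p q : E n, H x p ≤ 0 → η ≤ H x q → η * θ + ψ ≤ H x (p + θ • (q - p))

/-- condition (A6)₋. -/
def A6minus {n : ℕ} (H : E n → E n → ℝ) : Prop :=
  ∃ η₀ > (0:ℝ), ∃ θ₀ > (1:ℝ),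
    ∀ η ∈ Set.Ioo (0:ℝ) η₀, ∀ θ ∈ Set.Ioo (1:ℝ) θ₀, ∃ ψ > (0:ℝ),
      ∀ x p q : E n, H x p ≤ 0 → -η ≤ H x q → -(η * θ) + ψ ≤ H x (p + θ • (q - p))

/-- the modulus `ω_{H,R}`. -/
def omegaH {n : ℕ} (H : E n → E n → ℝ) (R r : ℝ) : ℝ :=
  sSup {a : ℝ | ∃ x p q : E n, ‖p‖ ≤ R ∧ ‖q‖ ≤ R ∧ ‖p - q‖ ≤ r ∧ a = |H x p - H x q|}

/-- `w(x,t) = sup_{s ≥ t} [u(x,t) − v₀(x) − θ(u(x,s) − v₀(x) + η(s−t))]`. -/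
def wPlus {n : ℕ} (u : E n → ℝ → ℝ) (v₀ : E n → ℝ) (η θ : ℝ) (x : E n) (t : ℝ) : ℝ :=
  sSup {a : ℝ | ∃ s : ℝ, t ≤ s ∧ a = u x t - v₀ x - θ * (u x s - v₀ x + η * (s - t))}

/-- `w(x,t) = max_{0 ≤ s ≤ t} [u(x,t) − v₀(x) − θ(u(x,s) − v₀(x) − η(s−t))]`. -/
def wMinus {n : ℕ} (u : E n → ℝ → ℝ) (v₀ : E n → ℝ) (η θ : ℝ) (x : E n) (t : ℝ) : ℝ :=
  sSup {a : ℝ | ∃ s : ℝ, 0 ≤ s ∧ s ≤ t ∧ a = u x t - v₀ x - θ * (u x s - v₀ x - η * (s - t))}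

open scoped NNReal

variable {n : ℕ}

theorem exists_norm_add_lat_le_sqrt (x : E n) : ∃ k : Fin n → ℤ, ‖x + lat n k‖ ≤ √n := by
  refine ⟨fun i => -⌊x i⌋, ?_⟩
  have hfract : ∀ i, (x + lat n fun i => -⌊x i⌋) i = Int.fract (x i) := fun i => by
    simp [lat, Int.fract, sub_eq_add_neg]
  rw [EuclideanSpace.norm_eq]
  refine Real.sqrt_le_sqrt ?_
  calc ∑ i, ‖(x + lat n fun i => -⌊x i⌋) i‖ ^ 2 ≤ ∑ _i : Fin n, (1 : ℝ) := by
        refine Finset.sum_le_sum fun i _ => ?_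
        rw [hfract, Real.norm_eq_abs, sq_abs]
        nlinarith [Int.fract_nonneg (x i), Int.fract_lt_one (x i)]
    _ = n := by simp

theorem Per.exists_abs_le {f : E n → ℝ} (hp : Per f) (hf : Continuous f) :
    ∃ C, ∀ x, |f x| ≤ C := by
  obtain ⟨C, hC⟩ := (isCompact_closedBall (0 : E n) √n).exists_bound_of_continuousOn
    hf.continuousOn
  refine ⟨C, fun x => ?_⟩
  obtain ⟨k, hk⟩ := exists_norm_add_lat_le_sqrt x
  rw [← hp x k, ← Real.norm_eq_abs]
  exact hC _ (mem_closedBall_zero_iff.2 hk)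

theorem hasGradientAt_mul_norm_sub_sq (c : ℝ) (a x : E n) :
    HasGradientAt (fun y => c * ‖y - a‖ ^ 2) ((2 * c) • (x - a)) x := by
  rw [hasGradientAt_iff_hasFDerivAt]
  refine ((((hasFDerivAt_id x).sub_const a).norm_sq).const_mul c).congr_fderiv ?_
  ext y
  simp
  ring

theorem contDiff_mul_norm_sub_sq (c : ℝ) (a : E n) :
    ContDiff ℝ 1 fun y : E n => c * ‖y - a‖ ^ 2 :=
  contDiff_const.mul ((contDiff_norm_sq ℝ).comp (contDiff_id.sub contDiff_const))

theorem hasDerivAt_max_zero_sq (r : ℝ) :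
    HasDerivAt (fun s : ℝ => max s 0 ^ 2) (2 * max r 0) r := by
  rw [hasDerivAt_iff_isLittleO]
  refine Asymptotics.IsBigO.trans_isLittleO (g := fun s => ‖s - r‖ ^ 2) ?_
    (Asymptotics.isLittleO_pow_sub_sub r one_lt_two)
  refine Asymptotics.IsBigO.of_bound 1 (Eventually.of_forall fun s => ?_)
  simp only [smul_eq_mul, Real.norm_eq_abs, sq_abs, one_mul, abs_pow]
  rw [abs_le]
  rcases le_total s 0 with hs | hs <;> rcases le_total r 0 with hr | hr <;>
    simp only [max_eq_left, max_eq_right, hs, hr] <;> constructor <;> nlinarith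

theorem contDiff_max_zero_sq : ContDiff ℝ 1 fun s : ℝ => max s 0 ^ 2 := by
  rw [contDiff_one_iff_deriv]
  refine ⟨fun r => (hasDerivAt_max_zero_sq r).differentiableAt, ?_⟩
  rw [funext fun r => (hasDerivAt_max_zero_sq r).deriv]
  fun_prop

theorem StatSub.le_of_isLocalMax {H : E n → E n → ℝ} {g v φ : E n → ℝ} (hv : StatSub H g v)
    (hφ : ContDiff ℝ 1 φ) {x p : E n} (hφx : HasGradientAt φ p x)
    (hmax : IsLocalMax (fun y => v y - φ y) x) : H x p ≤ g x := by
  simpa [hφx.gradient] using hv φ hφ x hmax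

theorem CPSub.le_of_isLocalMax {H : E n → E n → ℝ} {u : E n → ℝ → ℝ} (hu : CPSub H u)
    {g : E n → ℝ} {f : ℝ → ℝ} (hg : ContDiff ℝ 1 g) (hf : ContDiff ℝ 1 f) {x p : E n} {t : ℝ}
    (hgx : HasGradientAt g p x) (ht : 0 < t)
    (hmax : IsLocalMax (fun q : E n × ℝ => u q.1 q.2 - (g q.1 + f q.2)) (x, t)) :
    deriv f t + H x p ≤ 0 := by
  have h := hu (fun y s => g y + f s) ((hg.comp contDiff_fst).add (hf.comp contDiff_snd)) x t ht
    (hmax.on _)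
  have hgx' : HasGradientAt (fun y => g y + f t) p x := hgx.add_const (f t)
  rwa [deriv_const_add, hgx'.gradient] at h

theorem CPSuper.le_of_isLocalMin {H : E n → E n → ℝ} {u : E n → ℝ → ℝ} (hu : CPSuper H u)
    {g : E n → ℝ} {f : ℝ → ℝ} (hg : ContDiff ℝ 1 g) (hf : ContDiff ℝ 1 f) {x p : E n} {t : ℝ}
    (hgx : HasGradientAt g p x) (ht : 0 < t)
    (hmin : IsLocalMin (fun q : E n × ℝ => u q.1 q.2 - (g q.1 + f q.2)) (x, t)) :
    0 ≤ deriv f t + H x p := by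
  have h := hu (fun y s => g y + f s) ((hg.comp contDiff_fst).add (hf.comp contDiff_snd)) x t ht
    (hmin.on _)
  have hgx' : HasGradientAt (fun y => g y + f t) p x := hgx.add_const (f t)
  rwa [deriv_const_add, hgx'.gradient] at h

theorem _root_.LipschitzWith.mul_dist_le_of_le_sub_sq {X : Type*} [PseudoMetricSpace X]
    {f : X → ℝ} {L : ℝ≥0} (hf : LipschitzWith L f) {c α : ℝ} (hc : 0 ≤ c) {x y : X}
    (h : c * f x ≤ c * f y - α * dist x y ^ 2) : α * dist x y ≤ c * L := by
  have hlip : c * (f y - f x) ≤ c * (L * dist x y) := by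
    refine mul_le_mul_of_nonneg_left ((le_abs_self _).trans ?_) hc
    simpa [dist_comm x y, Real.dist_eq] using hf.dist_le_mul y x
  rcases (dist_nonneg (x := x) (y := y)).eq_or_lt with h0 | hpos
  · rw [← h0, mul_zero]
    exact mul_nonneg hc L.2
  · nlinarith

theorem lipschitzWith_slice_of_lipschitzOnWith {u : E n → ℝ → ℝ} {K : ℝ≥0}
    (hu : LipschitzOnWith K (fun q : E n × ℝ => u q.1 q.2) {q | 0 ≤ q.2}) {s : ℝ} (hs : 0 ≤ s) :
    LipschitzWith K fun x => u x s := by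
  simpa [Function.comp_def] using lipschitzOnWith_univ.1 <|
    hu.comp (LipschitzWith.prodMk_right s).lipschitzOnWith fun _ _ => hs

section wPlus

variable {u : E n → ℝ → ℝ} {v₀ : E n → ℝ} {η θ C₀ : ℝ}

theorem mem_upperBounds_wPlus_set (hη : 0 ≤ η) (hθ : 0 ≤ θ)
    (hbd : ∀ (x : E n) (t : ℝ), 0 ≤ t → 0 ≤ u x t - v₀ x ∧ u x t - v₀ x ≤ C₀)
    {x : E n} {t : ℝ} (ht : 0 ≤ t) :
    C₀ ∈ upperBounds
      {a : ℝ | ∃ s : ℝ, t ≤ s ∧ a = u x t - v₀ x - θ * (u x s - v₀ x + η * (s - t))} := by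
  rintro _ ⟨s, hs, rfl⟩
  have := (hbd x t ht).2
  have := (hbd x s (ht.trans hs)).1
  have : 0 ≤ η * (s - t) := mul_nonneg hη (sub_nonneg.2 hs)
  nlinarith

theorem le_wPlus (hη : 0 ≤ η) (hθ : 0 ≤ θ)
    (hbd : ∀ (x : E n) (t : ℝ), 0 ≤ t → 0 ≤ u x t - v₀ x ∧ u x t - v₀ x ≤ C₀)
    {x : E n} {t s : ℝ} (ht : 0 ≤ t) (hs : t ≤ s) :
    u x t - v₀ x - θ * (u x s - v₀ x + η * (s - t)) ≤ wPlus u v₀ η θ x t :=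
  le_csSup ⟨C₀, mem_upperBounds_wPlus_set hη hθ hbd ht⟩ ⟨s, hs, rfl⟩

theorem mul_le_wPlus (hη : 0 ≤ η) (hθ : 1 ≤ θ)
    (hbd : ∀ (x : E n) (t : ℝ), 0 ≤ t → 0 ≤ u x t - v₀ x ∧ u x t - v₀ x ≤ C₀)
    {x : E n} {t : ℝ} (ht : 0 ≤ t) : (1 - θ) * C₀ ≤ wPlus u v₀ η θ x t := by
  have := le_wPlus hη (zero_le_one.trans hθ) hbd ht le_rfl (x := x)
  have := (hbd x t ht).2
  nlinarith

end wPlus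

theorem exists_of_forall_approx {H : E n → E n → ℝ} (hH : ContH H) {D A B a b c θ : ℝ}
    (h : ∀ ε > 0, ∃ x y z p q : E n, ‖x‖ ≤ D ∧ ‖p‖ ≤ A ∧ ‖q‖ ≤ B ∧ ‖x - y‖ ≤ ε ∧ ‖x - z‖ ≤ ε ∧
      H y p ≤ a ∧ b ≤ H z q ∧ H x (p + θ • (q - p)) ≤ c) :
    ∃ x p q : E n, H x p ≤ a ∧ b ≤ H x q ∧ H x (p + θ • (q - p)) ≤ c := by
  choose x y z p q hx hp hq hy hz h₁ h₂ h₃ using fun j : ℕ => h (1 / (j + 1)) Nat.one_div_pos_of_nat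
  obtain ⟨⟨x₀, p₀, q₀⟩, -, φ, hφ, hlim⟩ := ((isCompact_closedBall (0 : E n) D).prod
    ((isCompact_closedBall (0 : E n) A).prod (isCompact_closedBall (0 : E n) B))).tendsto_subseq
    (x := fun j => (x j, p j, q j)) fun j => ⟨mem_closedBall_zero_iff.2 (hx j),
      mem_closedBall_zero_iff.2 (hp j), mem_closedBall_zero_iff.2 (hq j)⟩
  have hx₀ : Tendsto (x ∘ φ) atTop (𝓝 x₀) := (continuous_fst.tendsto _).comp hlim
  have hp₀ : Tendsto (p ∘ φ) atTop (𝓝 p₀) := (continuous_snd.fst.tendsto _).comp hlim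
  have hq₀ : Tendsto (q ∘ φ) atTop (𝓝 q₀) := (continuous_snd.snd.tendsto _).comp hlim
  have hclose : ∀ w : ℕ → E n, (∀ j, ‖x j - w j‖ ≤ 1 / (j + 1)) →
      Tendsto (w ∘ φ) atTop (𝓝 x₀) := fun w hw =>
    hx₀.congr_dist <| squeeze_zero (fun _ => dist_nonneg)
      (fun j => (dist_eq_norm _ _).trans_le (hw (φ j)))
      (tendsto_one_div_add_atTop_nhds_zero_nat.comp hφ.tendsto_atTop)
  have hH' := hH.tendsto
  exact ⟨x₀, p₀, q₀,
    le_of_tendsto' ((hH' _).comp ((hclose y hy).prodMk_nhds hp₀)) fun j => h₁ (φ j),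
    ge_of_tendsto' ((hH' _).comp ((hclose z hz).prodMk_nhds hq₀)) fun j => h₂ (φ j),
    le_of_tendsto' ((hH' _).comp (hx₀.prodMk_nhds (hp₀.add ((hq₀.sub hp₀).const_smul θ))))
      fun j => h₃ (φ j)⟩

theorem exists_timeWeight {C₀ δ ψ M t₀ τ : ℝ} (hψ : 0 < ψ) (hδ : 0 ≤ δ) (hτ : 0 ≤ τ)
    (hτδ : ψ * τ < 2 * C₀ + δ) (hM : 0 ≤ M) :
    ∃ (χ : ℝ → ℝ) (T : ℝ), t₀ + τ ≤ T ∧ ContDiff ℝ 1 χ ∧ (∀ t, -(ψ / 2) ≤ deriv χ t) ∧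
      (∀ t ∈ Icc t₀ T, δ / 2 ≤ χ t) ∧ χ t₀ = C₀ + δ ∧ M ≤ χ T ∧
      χ (t₀ + τ) = C₀ + δ - ψ / 2 * τ := by
  set ρ := (2 * C₀ + δ - ψ * τ) / ψ
  have hρ : 0 < ρ := div_pos (by linarith) hψ
  have hψρ : ψ * ρ = 2 * C₀ + δ - ψ * τ := mul_div_cancel₀ _ hψ.ne'
  set β := M / ρ ^ 2
  have hβ : 0 ≤ β := by positivity
  -- the quadratic term is a barrier that keeps maxima in time below `t₀ + τ + ρ`
  set χ : ℝ → ℝ := fun t => C₀ + δ - ψ / 2 * (t - t₀) + β * max (t - (t₀ + τ)) 0 ^ 2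
  have hχ' : ∀ t, HasDerivAt χ (-(ψ / 2 * 1) + β * (2 * max (t - (t₀ + τ)) 0 * 1)) t := fun t =>
    (((hasDerivAt_id' t).sub_const t₀).const_mul (ψ / 2)).const_sub (C₀ + δ) |>.add <|
      ((hasDerivAt_max_zero_sq _).comp t ((hasDerivAt_id' t).sub_const (t₀ + τ))).const_mul β
  refine ⟨χ, t₀ + τ + ρ, by linarith, ?_, fun t => ?_, fun t ht => ?_, ?_, ?_, ?_⟩
  · exact contDiff_const.sub (contDiff_const.mul (contDiff_id.sub contDiff_const)) |>.add <|
      contDiff_const.mul (contDiff_max_zero_sq.comp (contDiff_id.sub contDiff_const))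
  · rw [(hχ' t).deriv]
    have : 0 ≤ β * (2 * max (t - (t₀ + τ)) 0 * 1) := by positivity
    linarith
  · have : 0 ≤ β * max (t - (t₀ + τ)) 0 ^ 2 := by positivity
    have : ψ / 2 * (t - t₀) ≤ ψ / 2 * (τ + ρ) := by gcongr; linarith [ht.2]
    simp only [χ]
    linarith
  · simp [χ, hτ]
  · have hβρ : β * ρ ^ 2 = M := div_mul_cancel₀ _ (by positivity)
    simp only [χ, add_sub_cancel_left, max_eq_left hρ.le, hβρ]
    linarith
  · simp [χ]

/-- The functional of the doubling of variables: at `x = y = z` it is the quantity whose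
supremum over `s ≥ t` defines `wPlus`, minus `χ t`. -/
def doublingFun (u : E n → ℝ → ℝ) (v₀ : E n → ℝ) (η θ α : ℝ) (χ : ℝ → ℝ)
    (x y z : E n) (t s : ℝ) : ℝ :=
  u x t + (θ - 1) * v₀ y - θ * u z s - θ * η * (s - t) - α * ‖x - y‖ ^ 2 - α * ‖x - z‖ ^ 2 - χ t

section doubling

variable {u : E n → ℝ → ℝ} {v₀ : E n → ℝ} {η θ α : ℝ} {χ : ℝ → ℝ}

theorem doublingFun_add_lat (hup : ∀ t, 0 ≤ t → Per fun x => u x t) (hv₀p : Per v₀)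
    (x y z : E n) (k : Fin n → ℤ) {t s : ℝ} (ht : 0 ≤ t) (hs : 0 ≤ s) :
    doublingFun u v₀ η θ α χ (x + lat n k) (y + lat n k) (z + lat n k) t s =
      doublingFun u v₀ η θ α χ x y z t s := by
  simp only [doublingFun, hup t ht x k, hup s hs z k, hv₀p y k, add_sub_add_right_eq_sub]

theorem doublingFun_le {M : ℝ}
    (hM : ∀ x y z t s, 0 ≤ t → 0 ≤ s → u x t + (θ - 1) * v₀ y - θ * u z s ≤ M)
    {x y z : E n} {t s : ℝ} (ht : 0 ≤ t) (hs : 0 ≤ s) :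
    doublingFun u v₀ η θ α χ x y z t s ≤
      M - θ * η * (s - t) - α * ‖x - y‖ ^ 2 - α * ‖x - z‖ ^ 2 - χ t := by
  have := hM x y z t s ht hs
  unfold doublingFun
  linarith

theorem doublingFun_nonpos {M : ℝ}
    (hM : ∀ x y z t s, 0 ≤ t → 0 ≤ s → u x t + (θ - 1) * v₀ y - θ * u z s ≤ M) (hM₀ : 0 ≤ M)
    (hα : M ≤ α) (hθη : 0 < θ * η) {x y z : E n} {t s : ℝ} (ht : 0 ≤ t) (hts : t ≤ s)
    (hχ : 0 ≤ χ t) (hfar : 1 < ‖x - y‖ ∨ 1 < ‖x - z‖ ∨ M / (θ * η) < s - t) :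
    doublingFun u v₀ η θ α χ x y z t s ≤ 0 := by
  refine (doublingFun_le hM ht (ht.trans hts)).trans ?_
  have hα₀ : 0 ≤ α := hM₀.trans hα
  have : 0 ≤ θ * η * (s - t) := mul_nonneg hθη.le (sub_nonneg.2 hts)
  have : 0 ≤ α * ‖x - y‖ ^ 2 := by positivity
  have : 0 ≤ α * ‖x - z‖ ^ 2 := by positivity
  rcases hfar with h | h | h
  · have : α ≤ α * ‖x - y‖ ^ 2 := le_mul_of_one_le_right hα₀ (one_le_pow₀ h.le)
    linarith
  · have : α ≤ α * ‖x - z‖ ^ 2 := le_mul_of_one_le_right hα₀ (one_le_pow₀ h.le)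
    linarith
  · have := (div_lt_iff₀' hθη).1 h
    linarith

theorem exists_max_doublingFun {M t₀ T : ℝ}
    (hup : ∀ t, 0 ≤ t → Per fun x => u x t) (hv₀p : Per v₀)
    (huc : ContinuousOn (fun q : E n × ℝ => u q.1 q.2) {q | 0 ≤ q.2}) (hv₀c : Continuous v₀)
    (hχc : Continuous χ) (hχ : ∀ t ∈ Icc t₀ T, 0 ≤ χ t)
    (hM : ∀ x y z t s, 0 ≤ t → 0 ≤ s → u x t + (θ - 1) * v₀ y - θ * u z s ≤ M)
    (hM₀ : 0 ≤ M) (hα : M ≤ α) (hθη : 0 < θ * η) (ht₀ : 0 ≤ t₀)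
    {x₀ y₀ z₀ : E n} {t₁ s₁ : ℝ} (ht₁ : t₁ ∈ Icc t₀ T) (hs₁ : t₁ ≤ s₁)
    (hpos : 0 < doublingFun u v₀ η θ α χ x₀ y₀ z₀ t₁ s₁) :
    ∃ x y z t s, ‖x‖ ≤ √n ∧ t ∈ Icc t₀ T ∧ t ≤ s ∧ 0 < doublingFun u v₀ η θ α χ x y z t s ∧
      ∀ x' y' z' t' s', t' ∈ Icc t₀ T → t' ≤ s' →
        doublingFun u v₀ η θ α χ x' y' z' t' s' ≤ doublingFun u v₀ η θ α χ x y z t s := by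
  set G := doublingFun u v₀ η θ α χ
  set K := Metric.closedBall (0 : E n) √n ×ˢ Metric.closedBall (0 : E n) 1 ×ˢ
    Metric.closedBall (0 : E n) 1 ×ˢ Icc t₀ T ×ˢ Icc 0 (M / (θ * η))
  set Φ : E n × E n × E n × ℝ × ℝ → ℝ := fun P =>
    G P.1 (P.1 - P.2.1) (P.1 - P.2.2.1) P.2.2.2.1 (P.2.2.2.1 + P.2.2.2.2)
  -- up to a lattice shift, every point where `G` is positive comes from a point of `K`
  have hred : ∀ x y z t s, t ∈ Icc t₀ T → t ≤ s → G x y z t s ≤ 0 ∨ ∃ P ∈ K, G x y z t s = Φ P := by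
    intro x y z t s ht hts
    have ht0 : 0 ≤ t := ht₀.trans ht.1
    by_cases hnear : ‖x - y‖ ≤ 1 ∧ ‖x - z‖ ≤ 1 ∧ s - t ≤ M / (θ * η)
    · obtain ⟨k, hk⟩ := exists_norm_add_lat_le_sqrt x
      refine .inr ⟨(x + lat n k, x - y, x - z, t, s - t), ⟨mem_closedBall_zero_iff.2 hk,
        mem_closedBall_zero_iff.2 hnear.1, mem_closedBall_zero_iff.2 hnear.2.1, ht,
        sub_nonneg.2 hts, hnear.2.2⟩, ?_⟩
      have e : ∀ w : E n, x + lat n k - (x - w) = w + lat n k := fun w => by abel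
      simp only [Φ, e, add_sub_cancel, G]
      rw [doublingFun_add_lat hup hv₀p x y z k ht0 (ht0.trans hts)]
    · simp only [not_and_or, not_le] at hnear
      exact .inl (doublingFun_nonpos hM hM₀ hα hθη ht0 hts (hχ t ht) hnear)
  have hΦc : ContinuousOn Φ K := by
    have h₁ : MapsTo (fun P : E n × E n × E n × ℝ × ℝ => (P.1, P.2.2.2.1)) K {q | 0 ≤ q.2} :=
      fun P hP => (ht₀.trans hP.2.2.2.1.1 : (0 : ℝ) ≤ P.2.2.2.1)
    have h₂ : MapsTo (fun P : E n × E n × E n × ℝ × ℝ => (P.1 - P.2.2.1, P.2.2.2.1 + P.2.2.2.2))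
        K {q | 0 ≤ q.2} := fun P hP =>
      (add_nonneg (ht₀.trans hP.2.2.2.1.1) hP.2.2.2.2.1 : (0 : ℝ) ≤ P.2.2.2.1 + P.2.2.2.2)
    simp only [Φ, G, doublingFun]
    fun_prop (disch := assumption)
  have hKc : IsCompact K := (isCompact_closedBall _ _).prod <| (isCompact_closedBall _ _).prod <|
    (isCompact_closedBall _ _).prod <| isCompact_Icc.prod isCompact_Icc
  obtain ⟨P₀, hP₀K, hP₀⟩ := (hred x₀ y₀ z₀ t₁ s₁ ht₁ hs₁).resolve_left hpos.not_ge
  obtain ⟨P, hPK, hPmax⟩ := hKc.exists_isMaxOn ⟨P₀, hP₀K⟩ hΦc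
  have hPpos : 0 < Φ P := hpos.trans_le (hP₀ ▸ hPmax hP₀K)
  refine ⟨P.1, P.1 - P.2.1, P.1 - P.2.2.1, P.2.2.2.1, P.2.2.2.1 + P.2.2.2.2,
    mem_closedBall_zero_iff.1 hPK.1, hPK.2.2.2.1, le_add_of_nonneg_right hPK.2.2.2.2.1, hPpos,
    fun x y z t s ht hts => ?_⟩
  rcases hred x y z t s ht hts with h | ⟨Q, hQK, hQ⟩
  · exact h.trans hPpos.le
  · exact hQ ▸ hPmax hQK

theorem mul_norm_sub_le_of_forall_doublingFun_le_y {L : ℝ≥0} (hvL : LipschitzWith L v₀)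
    (hθ : 1 ≤ θ) {x y z : E n} {t s : ℝ}
    (hmax : ∀ y', doublingFun u v₀ η θ α χ x y' z t s ≤ doublingFun u v₀ η θ α χ x y z t s) :
    α * ‖x - y‖ ≤ (θ - 1) * L := by
  have h := hmax x
  simp only [doublingFun, sub_self, norm_zero] at h
  rw [← dist_eq_norm]
  exact hvL.mul_dist_le_of_le_sub_sq (sub_nonneg.2 hθ) (by rw [dist_eq_norm]; linarith)

theorem mul_norm_sub_le_of_forall_doublingFun_le_z {K : ℝ≥0} {s : ℝ}
    (huK : LipschitzWith K fun x => u x s) (hθ : 0 ≤ θ) {x y z : E n} {t : ℝ}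
    (hmax : ∀ z', doublingFun u v₀ η θ α χ x y z' t s ≤ doublingFun u v₀ η θ α χ x y z t s) :
    α * ‖x - z‖ ≤ θ * K := by
  have h := hmax x
  simp only [doublingFun, sub_self, norm_zero] at h
  rw [← dist_eq_norm]
  refine huK.neg.mul_dist_le_of_le_sub_sq hθ ?_
  rw [dist_eq_norm]
  simp only [Pi.neg_apply]
  linarith

theorem doublingFun_lt {K L : ℝ≥0} {s ε : ℝ} (hvL : LipschitzWith L v₀)
    (huK : LipschitzWith K fun x => u x s) (hθ : 1 ≤ θ) (hα : 0 < α)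
    (hε : ((θ - 1) * L) ^ 2 + (θ * K) ^ 2 < ε * α) {x y z : E n}
    (hxy : α * ‖x - y‖ ≤ (θ - 1) * L) (hxz : α * ‖x - z‖ ≤ θ * K) (t : ℝ) :
    doublingFun u v₀ η θ α χ x y z t s <
      u x t - v₀ x - θ * (u x s - v₀ x + η * (s - t)) + ε - χ t := by
  have hv : v₀ y - v₀ x ≤ L * ‖x - y‖ := by
    simpa [Real.dist_eq, dist_eq_norm, norm_sub_rev x y] using
      (le_abs_self _).trans (hvL.dist_le_mul y x)
  have hu : u x s - u z s ≤ K * ‖x - z‖ := by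
    simpa [Real.dist_eq, dist_eq_norm] using (le_abs_self _).trans (huK.dist_le_mul x z)
  have h₁ : α * ((θ - 1) * (v₀ y - v₀ x)) ≤ ((θ - 1) * L) ^ 2 :=
    calc α * ((θ - 1) * (v₀ y - v₀ x)) ≤ (θ - 1) * L * (α * ‖x - y‖) := by
          nlinarith [mul_le_mul_of_nonneg_left hv (mul_nonneg hα.le (sub_nonneg.2 hθ))]
      _ ≤ ((θ - 1) * L) ^ 2 := by
        rw [sq]; exact mul_le_mul_of_nonneg_left hxy (mul_nonneg (sub_nonneg.2 hθ) L.2)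
  have h₂ : α * (θ * (u x s - u z s)) ≤ (θ * K) ^ 2 :=
    calc α * (θ * (u x s - u z s)) ≤ θ * K * (α * ‖x - z‖) := by
          nlinarith [mul_le_mul_of_nonneg_left hu (mul_nonneg hα.le (by linarith : (0:ℝ) ≤ θ))]
      _ ≤ (θ * K) ^ 2 := by
        rw [sq]; exact mul_le_mul_of_nonneg_left hxz (mul_nonneg (by linarith) K.2)
  have h₃ : (θ - 1) * (v₀ y - v₀ x) + θ * (u x s - u z s) < ε :=
    lt_of_mul_lt_mul_left (by rw [mul_add]; linarith) hα.le
  unfold doublingFun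
  nlinarith [sq_nonneg ‖x - y‖, sq_nonneg ‖x - z‖]

theorem mem_Ioo_of_forall_doublingFun_le {C₀ M t₀ T ε : ℝ} (hη : 0 ≤ η) (hθ : 1 ≤ θ)
    (hα : 0 ≤ α) (hbd : ∀ (x : E n) (t : ℝ), 0 ≤ t → 0 ≤ u x t - v₀ x ∧ u x t - v₀ x ≤ C₀)
    (hM : ∀ x y z t s, 0 ≤ t → 0 ≤ s → u x t + (θ - 1) * v₀ y - θ * u z s ≤ M)
    (hχ : ∀ t ∈ Icc t₀ T, ε ≤ χ t) (hχ₀ : C₀ + ε ≤ χ t₀) (hχT : M ≤ χ T) (ht₀ : 0 ≤ t₀)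
    {x y z : E n} {t s : ℝ} (ht : t ∈ Icc t₀ T) (hts : t ≤ s)
    (hpos : 0 < doublingFun u v₀ η θ α χ x y z t s)
    (hlt : doublingFun u v₀ η θ α χ x y z t s <
      u x t - v₀ x - θ * (u x s - v₀ x + η * (s - t)) + ε - χ t) :
    t ∈ Ioo t₀ T ∧ t < s := by
  have ht0 : 0 ≤ t := ht₀.trans ht.1
  refine ⟨⟨ht.1.lt_of_ne ?_, ht.2.lt_of_ne ?_⟩, hts.lt_of_ne ?_⟩ <;> rintro rfl
  · have := mem_upperBounds_wPlus_set hη (zero_le_one.trans hθ) hbd ht0 ⟨s, hts, rfl⟩ (x := x)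
    linarith
  · have : doublingFun u v₀ η θ α χ x y z t s ≤ _ := doublingFun_le hM ht0 (ht0.trans hts)
    have : 0 ≤ θ * η * (s - t) := mul_nonneg (by positivity) (sub_nonneg.2 hts)
    nlinarith [sq_nonneg ‖x - y‖, sq_nonneg ‖x - z‖]
  · have := (hbd x t ht0).1
    have := hχ t ht
    nlinarith

theorem H_le_zero_of_forall_doublingFun_le {H : E n → E n → ℝ}
    (hv₀sub : StatSub H (fun _ => 0) v₀) (hθ : 1 < θ) {x y z : E n} {t s : ℝ}
    (hmax : ∀ y', doublingFun u v₀ η θ α χ x y' z t s ≤ doublingFun u v₀ η θ α χ x y z t s) :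
    H y ((2 * (α / (θ - 1))) • (y - x)) ≤ 0 := by
  refine hv₀sub.le_of_isLocalMax (contDiff_mul_norm_sub_sq _ _)
    (hasGradientAt_mul_norm_sub_sq _ _ _) (Eventually.of_forall fun y' => ?_)
  have h := hmax y'
  simp only [doublingFun, norm_sub_rev x] at h
  have hθ₁ : 0 < θ - 1 := sub_pos.2 hθ
  dsimp only
  rw [← mul_le_mul_iff_of_pos_left hθ₁]
  field_simp
  linarith

theorem le_H_of_forall_doublingFun_le {H : E n → E n → ℝ} (husup : CPSuper H u) (hθ : 0 < θ)
    {x y z : E n} {t s : ℝ} (ht : 0 ≤ t) (hts : t < s)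
    (hmax : ∀ z' s', t < s' →
      doublingFun u v₀ η θ α χ x y z' t s' ≤ doublingFun u v₀ η θ α χ x y z t s) :
    η ≤ H z ((2 * -(α / θ)) • (z - x)) := by
  have hmin : IsLocalMin
      (fun q : E n × ℝ => u q.1 q.2 - (-(α / θ) * ‖q.1 - x‖ ^ 2 + -η * q.2)) (z, s) := by
    refine IsMinOn.isLocalMin (isMinOn_iff.2 fun q (hq : q ∈ univ ×ˢ Ioi t) => ?_)
      (prod_mem_nhds univ_mem (Ioi_mem_nhds hts))
    have h := hmax q.1 q.2 hq.2
    simp only [doublingFun, norm_sub_rev x] at h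
    rw [← mul_le_mul_iff_of_pos_left hθ]
    field_simp
    linarith
  have h := husup.le_of_isLocalMin (contDiff_mul_norm_sub_sq _ _)
    (contDiff_const.mul contDiff_id : ContDiff ℝ 1 fun s' : ℝ => -η * s')
    (hasGradientAt_mul_norm_sub_sq _ _ _) (by linarith) hmin
  rw [((hasDerivAt_id' s).const_mul (-η)).deriv] at h
  linarith

theorem H_le_of_forall_doublingFun_le {H : E n → E n → ℝ} {ψ t₀ T : ℝ} (husub : CPSub H u)
    (hχ : ContDiff ℝ 1 χ) (hχ' : ∀ t, -(ψ / 2) ≤ deriv χ t) (ht₀ : 0 ≤ t₀)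
    {x y z : E n} {t s : ℝ} (ht : t ∈ Ioo t₀ T) (hts : t < s)
    (hmax : ∀ x' t', t' ∈ Ioo t₀ T → t' < s →
      doublingFun u v₀ η θ α χ x' y z t' s ≤ doublingFun u v₀ η θ α χ x y z t s) :
    H x ((2 * α) • (x - y) + (2 * α) • (x - z)) ≤ θ * η + ψ / 2 := by
  have hmax' : IsLocalMax (fun q : E n × ℝ => u q.1 q.2 -
      ((α * ‖q.1 - y‖ ^ 2 + α * ‖q.1 - z‖ ^ 2) + (χ q.2 - θ * η * q.2))) (x, t) := by
    refine IsMaxOn.isLocalMax (isMaxOn_iff.2 fun q (hq : q ∈ univ ×ˢ Ioo t₀ (min T s)) => ?_)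
      (prod_mem_nhds univ_mem (Ioo_mem_nhds ht.1 (lt_min ht.2 hts)))
    have h := hmax q.1 q.2 ⟨hq.2.1, hq.2.2.trans_le (min_le_left _ _)⟩
      (hq.2.2.trans_le (min_le_right _ _))
    simp only [doublingFun] at h
    linarith
  have hg : HasGradientAt (fun x' => α * ‖x' - y‖ ^ 2 + α * ‖x' - z‖ ^ 2)
      ((2 * α) • (x - y) + (2 * α) • (x - z)) x := by
    rw [hasGradientAt_iff_hasFDerivAt, map_add]
    exact (hasGradientAt_mul_norm_sub_sq α y x).add (hasGradientAt_mul_norm_sub_sq α z x)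
  have h := husub.le_of_isLocalMax
    ((contDiff_mul_norm_sub_sq α y).add (contDiff_mul_norm_sub_sq α z))
    (hχ.sub (contDiff_const.mul contDiff_id) : ContDiff ℝ 1 fun t' => χ t' - θ * η * t') hg
    (ht₀.trans_lt ht.1) hmax'
  have hd : HasDerivAt (fun t' => χ t' - θ * η * t') (deriv χ t - θ * η * 1) t :=
    ((hχ.differentiable one_ne_zero) t).hasDerivAt.sub ((hasDerivAt_id' t).const_mul (θ * η))
  rw [hd.deriv] at h
  linarith [hχ' t]

theorem exists_approx_config_of_doublingFun_pos {H : E n → E n → ℝ} {K L : ℝ≥0}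
    {C₀ M ψ t₀ T ε : ℝ} (hup : ∀ t, 0 ≤ t → Per fun x => u x t) (hv₀p : Per v₀)
    (huK : LipschitzOnWith K (fun q : E n × ℝ => u q.1 q.2) {q | 0 ≤ q.2})
    (hvL : LipschitzWith L v₀) (husub : CPSub H u) (husup : CPSuper H u)
    (hv₀sub : StatSub H (fun _ => 0) v₀)
    (hbd : ∀ (x : E n) (t : ℝ), 0 ≤ t → 0 ≤ u x t - v₀ x ∧ u x t - v₀ x ≤ C₀)
    (hM : ∀ x y z t s, 0 ≤ t → 0 ≤ s → u x t + (θ - 1) * v₀ y - θ * u z s ≤ M) (hM₀ : 0 ≤ M)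
    (hη : 0 < η) (hθ : 1 < θ) (hχ : ContDiff ℝ 1 χ) (hχ' : ∀ t, -(ψ / 2) ≤ deriv χ t)
    (hε : 0 < ε) (hχε : ∀ t ∈ Icc t₀ T, ε ≤ χ t) (hχ₀ : C₀ + ε ≤ χ t₀) (hχT : M ≤ χ T)
    (ht₀ : 0 ≤ t₀) (hα : M ≤ α) (hα₀ : 0 < α) (hαε : ((θ - 1) * L) ^ 2 + (θ * K) ^ 2 < ε * α)
    {x₀ : E n} {t₁ s₁ : ℝ} (ht₁ : t₁ ∈ Icc t₀ T) (hs₁ : t₁ ≤ s₁)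
    (hpos : 0 < doublingFun u v₀ η θ α χ x₀ x₀ x₀ t₁ s₁) :
    ∃ x y z p q : E n, ‖x‖ ≤ √n ∧ ‖p‖ ≤ 2 * L ∧ ‖q‖ ≤ 2 * K ∧ α * ‖x - y‖ ≤ (θ - 1) * L ∧
      α * ‖x - z‖ ≤ θ * K ∧ H y p ≤ 0 ∧ η ≤ H z q ∧ H x (p + θ • (q - p)) ≤ θ * η + ψ / 2 := by
  have hθ₁ : 0 < θ - 1 := sub_pos.2 hθ
  have hθ₀ : 0 < θ := by linarith
  obtain ⟨x, y, z, t, s, hx, ht, hts, hGpos, hmax⟩ := exists_max_doublingFun hup hv₀p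
    huK.continuousOn hvL.continuous hχ.continuous (fun t ht => hε.le.trans (hχε t ht)) hM hM₀
    hα (mul_pos hθ₀ hη) ht₀ ht₁ hs₁ hpos
  have huKs := lipschitzWith_slice_of_lipschitzOnWith huK (ht₀.trans (ht.1.trans hts))
  have hxy := mul_norm_sub_le_of_forall_doublingFun_le_y hvL hθ.le fun y' =>
    hmax x y' z t s ht hts
  have hxz := mul_norm_sub_le_of_forall_doublingFun_le_z huKs hθ₀.le fun z' =>
    hmax x y z' t s ht hts
  obtain ⟨ht', hts'⟩ := mem_Ioo_of_forall_doublingFun_le hη.le hθ.le hα₀.le hbd hM hχε hχ₀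
    hχT ht₀ ht hts hGpos (doublingFun_lt hvL huKs hθ.le hα₀ hαε hxy hxz t)
  refine ⟨x, y, z, _, _, hx, ?_, ?_, hxy, hxz,
    H_le_zero_of_forall_doublingFun_le hv₀sub hθ fun y' => hmax x y' z t s ht hts,
    le_H_of_forall_doublingFun_le husup hθ₀ (ht₀.trans ht.1) hts' fun z' s' hs' =>
      hmax x y z' t s' ht hs'.le, ?_⟩
  · rw [norm_smul, Real.norm_eq_abs, abs_of_pos (by positivity), norm_sub_rev]
    calc 2 * (α / (θ - 1)) * ‖x - y‖ = 2 * (α * ‖x - y‖) / (θ - 1) := by ring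
      _ ≤ 2 * ((θ - 1) * L) / (θ - 1) := by gcongr
      _ = 2 * L := by field_simp
  · rw [norm_smul, Real.norm_eq_abs, abs_mul, abs_neg, abs_of_pos (by positivity : 0 < α / θ),
      norm_sub_rev, abs_two]
    calc 2 * (α / θ) * ‖x - z‖ = 2 * (α * ‖x - z‖) / θ := by ring
      _ ≤ 2 * (θ * K) / θ := by gcongr
      _ = 2 * K := by field_simp
  · have e₁ : (1 - θ) * (2 * (α / (θ - 1))) = -(2 * α) := by
      field_simp
      ring
    have e₂ : θ * (2 * -(α / θ)) = -(2 * α) := by field_simp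
    convert H_le_of_forall_doublingFun_le husub hχ hχ' ht₀ ht' hts'
      (fun x' t' ht' hts' => hmax x' y z t' s ⟨ht'.1.le, ht'.2.le⟩ hts'.le) using 2
    calc (2 * (α / (θ - 1))) • (y - x) +
          θ • ((2 * -(α / θ)) • (z - x) - (2 * (α / (θ - 1))) • (y - x))
        = ((1 - θ) * (2 * (α / (θ - 1)))) • (y - x) + (θ * (2 * -(α / θ))) • (z - x) := by
          module
      _ = (2 * α) • (x - y) + (2 * α) • (x - z) := by rw [e₁, e₂]; module

theorem wPlus_le_of_timeWeight {H : E n → E n → ℝ} {K L : ℝ≥0} {C₀ M ψ t₀ T ε : ℝ}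
    (hHc : ContH H)
    (hA6 : ∀ x p q : E n, H x p ≤ 0 → η ≤ H x q → η * θ + ψ ≤ H x (p + θ • (q - p)))
    (hup : ∀ t, 0 ≤ t → Per fun x => u x t) (hv₀p : Per v₀)
    (huK : LipschitzOnWith K (fun q : E n × ℝ => u q.1 q.2) {q | 0 ≤ q.2})
    (hvL : LipschitzWith L v₀) (husub : CPSub H u) (husup : CPSuper H u)
    (hv₀sub : StatSub H (fun _ => 0) v₀)
    (hbd : ∀ (x : E n) (t : ℝ), 0 ≤ t → 0 ≤ u x t - v₀ x ∧ u x t - v₀ x ≤ C₀)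
    (hM : ∀ x y z t s, 0 ≤ t → 0 ≤ s → u x t + (θ - 1) * v₀ y - θ * u z s ≤ M) (hM₀ : 0 ≤ M)
    (hη : 0 < η) (hθ : 1 < θ) (hψ : 0 < ψ) (hχ : ContDiff ℝ 1 χ)
    (hχ' : ∀ t, -(ψ / 2) ≤ deriv χ t) (hε : 0 < ε) (hχε : ∀ t ∈ Icc t₀ T, ε ≤ χ t)
    (hχ₀ : C₀ + ε ≤ χ t₀) (hχT : M ≤ χ T) (ht₀ : 0 ≤ t₀) (x : E n) {t : ℝ}
    (ht : t ∈ Icc t₀ T) :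
    wPlus u v₀ η θ x t ≤ χ t := by
  refine csSup_le ⟨_, t, le_rfl, rfl⟩ ?_
  rintro _ ⟨s, hs, rfl⟩
  by_contra! hgt
  have hwit : ∀ r > 0, ∃ x y z p q : E n, ‖x‖ ≤ √n ∧ ‖p‖ ≤ 2 * L ∧ ‖q‖ ≤ 2 * K ∧
      ‖x - y‖ ≤ r ∧ ‖x - z‖ ≤ r ∧ H y p ≤ 0 ∧ η ≤ H z q ∧
      H x (p + θ • (q - p)) ≤ θ * η + ψ / 2 := by
    intro r hr
    have hyL : 0 ≤ (θ - 1) * L := mul_nonneg (by linarith) L.2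
    have hzK : 0 ≤ θ * K := mul_nonneg (by linarith) K.2
    obtain ⟨α, hMα, hα, hαε, hαr⟩ := ((eventually_ge_atTop M).and ((eventually_gt_atTop 0).and
      (((tendsto_id.const_mul_atTop hε).eventually_gt_atTop (((θ - 1) * L) ^ 2 + (θ * K) ^ 2)).and
      ((tendsto_id.const_mul_atTop hr).eventually_ge_atTop ((θ - 1) * L + θ * K))))).exists
    obtain ⟨x, y, z, p, q, hx, hp, hq, hxy, hxz, h⟩ := exists_approx_config_of_doublingFun_pos
      hup hv₀p huK hvL husub husup hv₀sub hbd hM hM₀ hη hθ hχ hχ' hε hχε hχ₀ hχT ht₀ hMα hα hαε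
      ht hs (by simp only [doublingFun, sub_self, norm_zero]; linarith)
    simp only [id] at hαr
    refine ⟨x, y, z, p, q, hx, hp, hq, ?_, ?_, h⟩ <;> refine le_of_mul_le_mul_left ?_ hα <;>
      linarith
  obtain ⟨x, p, q, h₁, h₂, h₃⟩ := exists_of_forall_approx hHc hwit
  linarith [hA6 x p q h₁ h₂]

theorem exists_forall_wPlus_le {H : E n → E n → ℝ} {K L : ℝ≥0} {C₀ ψ : ℝ} (hHc : ContH H)
    (hA6 : ∀ x p q : E n, H x p ≤ 0 → η ≤ H x q → η * θ + ψ ≤ H x (p + θ • (q - p)))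
    (hup : ∀ t, 0 ≤ t → Per fun x => u x t) (hv₀p : Per v₀)
    (huK : LipschitzOnWith K (fun q : E n × ℝ => u q.1 q.2) {q | 0 ≤ q.2})
    (hvL : LipschitzWith L v₀) (husub : CPSub H u) (husup : CPSuper H u)
    (hv₀sub : StatSub H (fun _ => 0) v₀)
    (hbd : ∀ (x : E n) (t : ℝ), 0 ≤ t → 0 ≤ u x t - v₀ x ∧ u x t - v₀ x ≤ C₀)
    (hη : 0 < η) (hθ : 1 < θ) (hψ : 0 < ψ) {ε : ℝ} (hε : 0 < ε) :
    ∃ T, ∀ t ≥ T, ∀ x, wPlus u v₀ η θ x t ≤ ε := by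
  obtain ⟨Cv, hCv⟩ := hv₀p.exists_abs_le hvL.continuous
  have hC₀ : 0 ≤ C₀ := (hbd 0 0 le_rfl).1.trans (hbd 0 0 le_rfl).2
  have hCv₀ : 0 ≤ Cv := (abs_nonneg _).trans (hCv 0)
  have hM : ∀ x y z t s, 0 ≤ t → 0 ≤ s →
      u x t + (θ - 1) * v₀ y - θ * u z s ≤ C₀ + 2 * θ * Cv := by
    intro x y z t s ht hs
    have := (hbd x t ht).2
    have := (hbd z s hs).1
    have := abs_le.1 (hCv x)
    have := abs_le.1 (hCv y)
    have := abs_le.1 (hCv z)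
    nlinarith
  set τ := max 0 ((2 * C₀ - ε) / ψ)
  have hτ : 0 ≤ τ := le_max_left _ _
  have hψτ : ψ * τ = max 0 (2 * C₀ - ε) := by
    rw [mul_max_of_nonneg _ _ hψ.le, mul_zero, mul_div_cancel₀ _ hψ.ne']
  refine ⟨1 + τ, fun t ht x => ?_⟩
  obtain ⟨χ, T, hT, hχ, hχ', hχε, hχ₀, hχT, hχτ⟩ := exists_timeWeight (C₀ := C₀) (t₀ := t - τ)
    (δ := ε / 2) (M := C₀ + 2 * θ * Cv) hψ (by positivity) hτ
    (by rw [hψτ]; exact max_lt (by positivity) (by linarith)) (by positivity)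
  rw [sub_add_cancel] at hT hχτ
  calc wPlus u v₀ η θ x t ≤ χ t := wPlus_le_of_timeWeight hHc hA6 hup hv₀p huK hvL husub husup
        hv₀sub hbd hM (by positivity) hη hθ hψ hχ hχ' (by positivity) hχε (by linarith) hχT
        (by linarith) x ⟨by linarith, hT⟩
    _ ≤ ε := by rw [hχτ]; linarith [le_max_right 0 (2 * C₀ - ε)]

end doubling

theorem stmt_8_general {n : ℕ} (H : E n → E n → ℝ) (u₀ : E n → ℝ)
    (hHc : ContH H)
    (η₀ θ₀ η θ ψ : ℝ)
    (hη : η ∈ Set.Ioo 0 η₀) (hθ : θ ∈ Set.Ioo 1 θ₀) (hψ : 0 < ψ)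
    (hA6' : ∀ x p q : E n, H x p ≤ 0 → η ≤ H x q → η * θ + ψ ≤ H x (p + θ • (q - p)))
    (u : E n → ℝ → ℝ) (hu : IsCP H u₀ u)
    (huLip : ∃ K : NNReal,
      LipschitzOnWith K (fun q : E n × ℝ => u q.1 q.2) {q : E n × ℝ | 0 ≤ q.2})
    (v₀ : E n → ℝ) (hv₀p : Per v₀) (hv₀ : StatSol H 0 v₀)
    (C₀ : ℝ)
    (hbd : ∀ (x : E n) (t : ℝ), 0 ≤ t → 0 ≤ u x t - v₀ x ∧ u x t - v₀ x ≤ C₀)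
    (L : ℝ)
    (hvL : LipschitzWith L.toNNReal v₀) :
    (∀ x : E n, Filter.limsup (fun t : ℝ => wPlus u v₀ η θ x t) atTop ≤ 0) ∧
    TendstoUniformly (fun (t : ℝ) (x : E n) => max (wPlus u v₀ η θ x t) 0)
      (fun _ => (0:ℝ)) atTop := by
  obtain ⟨K, huK⟩ := huLip
  have hw : ∀ ε > 0, ∀ᶠ t in atTop, ∀ x, wPlus u v₀ η θ x t ≤ ε := fun ε hε =>
    eventually_atTop.2 <| exists_forall_wPlus_le hHc hA6' hu.2.1 hv₀p huK hvL hu.2.2.1.1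
      hu.2.2.1.2 hv₀.1 hbd hη.1 hθ.1 hψ hε
  refine ⟨fun x => le_of_forall_pos_le_add fun ε hε => ?_, ?_⟩
  · rw [zero_add]
    refine limsup_le_of_le ?_ ((hw ε hε).mono fun t ht => ht x)
    exact isCoboundedUnder_le_of_eventually_le atTop
      ((eventually_ge_atTop 0).mono fun t ht => mul_le_wPlus hη.1.le hθ.1.le hbd ht)
  · rw [Metric.tendstoUniformly_iff]
    intro ε hε
    filter_upwards [hw (ε / 2) (half_pos hε)] with t ht x
    rw [dist_zero_left, Real.norm_of_nonneg (le_max_right _ _)]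
    exact (max_le (ht x) (half_pos hε).le).trans_lt (half_lt_self hε)

/-- `limsup_{t→∞} w(x,t) ≤ 0` and `max{w,0} → 0` uniformly, in the setting
of the key proposition under (A6)₊. -/
theorem stmt_8 {n : ℕ} (H : E n → E n → ℝ) (u₀ : E n → ℝ)
    (hHc : ContH H) (hHp : PerH H) (hco : Coercive H) (hA5 : A5 H)
    (hu₀l : IsLip u₀) (hu₀p : Per u₀)
    (hA6 : A6plus H)
    (η₀ θ₀ η θ ψ : ℝ) (hη₀ : 0 < η₀) (hθ₀ : 1 < θ₀)
    (hη : η ∈ Set.Ioo 0 η₀) (hθ : θ ∈ Set.Ioo 1 θ₀) (hψ : 0 < ψ)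
    (hA6' : ∀ x p q : E n, H x p ≤ 0 → η ≤ H x q → η * θ + ψ ≤ H x (p + θ • (q - p)))
    (u : E n → ℝ → ℝ) (hu : IsCP H u₀ u)
    (huLip : ∃ K : NNReal,
      LipschitzOnWith K (fun q : E n × ℝ => u q.1 q.2) {q : E n × ℝ | 0 ≤ q.2})
    (v₀ : E n → ℝ) (hv₀p : Per v₀) (hv₀ : StatSol H 0 v₀)
    (C₀ : ℝ) (hC₀ : 0 < C₀)
    (hbd : ∀ (x : E n) (t : ℝ), 0 ≤ t → 0 ≤ u x t - v₀ x ∧ u x t - v₀ x ≤ C₀)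
    (L : ℝ) (hL : 0 ≤ L)
    (huL : ∀ t : ℝ, 0 ≤ t → LipschitzWith L.toNNReal fun x => u x t)
    (hvL : LipschitzWith L.toNNReal v₀) :
    (∀ x : E n, Filter.limsup (fun t : ℝ => wPlus u v₀ η θ x t) atTop ≤ 0) ∧
    TendstoUniformly (fun (t : ℝ) (x : E n) => max (wPlus u v₀ η θ x t) 0)
      (fun _ => (0:ℝ)) atTop :=
  stmt_8_general H u₀ hHc η₀ θ₀ η θ ψ hη hθ hψ hA6' u hu huLip v₀ hv₀p hv₀ C₀ hbd L hvL

end HJpaper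
end
end

section
/- Let H ∈ C(ℝⁿ×ℝⁿ) satisfy (A2)–(A4), and suppose that for each x ∈ ℝⁿ the function p ↦ H(x,p) is strictly convex on ℝⁿ. Then H satisfies both (A6)₊ and (A6)₋. -/
/-!
If `H x p ≤ 0` and `c ≤ H x q` with `c ≠ 0`, then `q` is a proper convex combination of `p` and
`r = p + θ • (q - p)`, so strict convexity gives `c * θ < H x r`. The gap is made uniform by
compactness: by periodicity `x` may be taken in the unit cube, by coercivity `p` stays bounded,
and when `q` is large so is `r`, where coercivity alone gives the bound. (A6)₊ and (A6)₋ are the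
cases `c = η` and `c = -η`.
-/

noncomputable section

open Filter Set Topology

lemma IsCompact.exists_pos_forall_add_le {X : Type*} [TopologicalSpace X] {K : Set X}
    (hK : IsCompact K) {F : X → ℝ} (hF : ContinuousOn F K) {b : ℝ}
    (hlt : ∀ a ∈ K, b < F a) : ∃ ψ > 0, ∀ a ∈ K, b + ψ ≤ F a := by
  rcases K.eq_empty_or_nonempty with rfl | hne
  · exact ⟨1, one_pos, by simp⟩
  obtain ⟨a₀, ha₀, hmin⟩ := hK.exists_isMinOn hne hF
  exact ⟨F a₀ - b, sub_pos.mpr (hlt a₀ ha₀), fun a ha => by linarith [isMinOn_iff.mp hmin a ha]⟩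

lemma norm_le_norm_add_smul_sub {F : Type*} [SeminormedAddCommGroup F] [NormedSpace ℝ F]
    {p q : F} {θ : ℝ} (hθ : 1 ≤ θ) (hpq : ‖p‖ ≤ ‖q‖) : ‖q‖ ≤ ‖p + θ • (q - p)‖ := by
  have hsub := norm_sub_norm_le (θ • q) ((θ - 1) • p)
  rw [norm_smul, norm_smul, Real.norm_of_nonneg (by linarith),
    Real.norm_of_nonneg (by linarith)] at hsub
  have hrw : p + θ • (q - p) = θ • q - (θ - 1) • p := by module
  rw [hrw]
  nlinarith

lemma StrictConvexOn.mul_lt_apply_add_smul_sub {V : Type*} [AddCommGroup V] [Module ℝ V]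
    {f : V → ℝ} (hf : StrictConvexOn ℝ univ f) {p q : V} {c θ : ℝ} (hc : c ≠ 0)
    (hθ : 1 < θ) (hp : f p ≤ 0) (hq : c ≤ f q) : c * θ < f (p + θ • (q - p)) := by
  have hθ₀ : 0 < θ := by linarith
  by_cases hpq : p = q
  · subst hpq
    have hc₀ : c < 0 := lt_of_le_of_ne (hq.trans hp) hc
    simp only [sub_self, smul_zero, add_zero]
    nlinarith
  set r := p + θ • (q - p)
  have hrp : r ≠ p := by
    intro h
    have : θ • (q - p) = 0 := by simpa [r] using h
    rcases smul_eq_zero.mp this with h | h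
    · exact hθ₀.ne' h
    · exact hpq (sub_eq_zero.mp h).symm
  have hcomb : θ⁻¹ • r + (1 - θ⁻¹) • p = q := by
    simp only [r, smul_add, smul_smul, inv_mul_cancel₀ hθ₀.ne', one_smul, sub_smul]
    abel
  have hconv := hf.2 (mem_univ r) (mem_univ p) hrp (inv_pos.mpr hθ₀)
    (sub_pos.mpr (inv_lt_one_of_one_lt₀ hθ)) (add_sub_cancel _ _)
  rw [hcomb, smul_eq_mul, smul_eq_mul] at hconv
  have hθq : θ * f q < f r + (θ - 1) * f p := by
    have := mul_lt_mul_of_pos_left hconv hθ₀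
    field_simp at this
    linarith
  nlinarith

namespace HJpaper

def unitCube (n : ℕ) : Set (E n) := {x | ∀ i, x i ∈ Icc (0 : ℝ) 1}

lemma isCompact_unitCube (n : ℕ) : IsCompact (unitCube n) := by
  have h := (EuclideanSpace.equiv (Fin n) ℝ).toHomeomorph.isCompact_preimage.mpr
    (isCompact_univ_pi fun _ => isCompact_Icc (a := (0 : ℝ)) (b := 1))
  convert h using 1
  ext x
  simp only [unitCube, mem_preimage, mem_univ_pi]
  rfl

lemma exists_add_lat_mem_unitCube {n : ℕ} (x : E n) : ∃ k, x + lat n k ∈ unitCube n := by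
  refine ⟨fun i => -⌊x i⌋, fun i => ?_⟩
  have hcoord : (x + lat n fun i => -⌊x i⌋) i = x i - ⌊x i⌋ := by
    simp [lat, sub_eq_add_neg]
  rw [hcoord]
  exact ⟨by linarith [Int.floor_le (x i)], by linarith [Int.lt_floor_add_one (x i)]⟩

lemma Coercive.exists_norm_lt_of_le {n : ℕ} {H : E n → E n → ℝ} (hco : Coercive H) (M : ℝ) :
    ∃ R, ∀ x p, H x p ≤ M → ‖p‖ < R := by
  obtain ⟨R, hR⟩ := hco (M + 1)
  exact ⟨R, fun x p hp => not_le.mp fun h => by linarith [hR x p h]⟩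

lemma ContH.comp {X : Type*} [TopologicalSpace X] {n : ℕ} {H : E n → E n → ℝ} (hH : ContH H)
    {f g : X → E n} (hf : Continuous f) (hg : Continuous g) :
    Continuous fun a => H (f a) (g a) :=
  Continuous.comp (g := fun q : E n × E n => H q.1 q.2) hH (hf.prodMk hg)

lemma exists_pos_forall_mul_add_le_apply_add_smul_sub {n : ℕ} {H : E n → E n → ℝ}
    (hHc : ContH H) (hHp : PerH H) (hco : Coercive H) (hsc : ∀ x, StrictConvexOn ℝ univ (H x))
    {c θ : ℝ} (hc : c ≠ 0) (hθ : 1 < θ) :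
    ∃ ψ > 0, ∀ x p q, H x p ≤ 0 → c ≤ H x q → c * θ + ψ ≤ H x (p + θ • (q - p)) := by
  obtain ⟨R₀, hR₀⟩ := hco.exists_norm_lt_of_le 0
  obtain ⟨R₁, hR₁⟩ := hco (c * θ + 1)
  set R := max R₀ R₁
  set K : Set (E n × E n × E n) :=
    (unitCube n ×ˢ Metric.closedBall 0 R₀ ×ˢ Metric.closedBall 0 R) ∩
      {a | H a.1 a.2.1 ≤ 0 ∧ c ≤ H a.1 a.2.2}
  have hK : IsCompact K := by
    refine ((isCompact_unitCube n).prod ((isCompact_closedBall _ _).prod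
      (isCompact_closedBall _ _))).inter_right ?_
    exact (isClosed_le (hHc.comp (by fun_prop) (by fun_prop)) continuous_const).inter
      (isClosed_le continuous_const (hHc.comp (by fun_prop) (by fun_prop)))
  obtain ⟨ψ, hψ, hψK⟩ := hK.exists_pos_forall_add_le
    (F := fun a => H a.1 (a.2.1 + θ • (a.2.2 - a.2.1)))
    (hHc.comp (by fun_prop) (by fun_prop)).continuousOn
    fun a ha => (hsc a.1).mul_lt_apply_add_smul_sub hc hθ ha.2.1 ha.2.2
  refine ⟨min ψ 1, lt_min hψ one_pos, fun x p q hp hq => ?_⟩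
  obtain ⟨k, hk⟩ := exists_add_lat_mem_unitCube x
  have hshift : ∀ p, H (x + lat n k) p = H x p := fun p => hHp p x k
  have hpR₀ : ‖p‖ < R₀ := hR₀ x p hp
  by_cases hqR : ‖q‖ ≤ R
  · have hmem : (x + lat n k, p, q) ∈ K := by
      refine ⟨⟨hk, ?_, ?_⟩, ?_, ?_⟩
      · simpa using hpR₀.le
      · simpa using hqR
      · simpa [hshift] using hp
      · simpa [hshift] using hq
    have := hψK _ hmem
    simp only [hshift] at this
    linarith [min_le_left ψ 1]
  · have hpq : ‖p‖ ≤ ‖q‖ := by linarith [le_max_left R₀ R₁, not_le.mp hqR]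
    have hr := norm_le_norm_add_smul_sub hθ.le hpq
    have := hR₁ x _ (by linarith [le_max_right R₀ R₁, not_le.mp hqR])
    linarith [min_le_right ψ 1]

/-- strict convexity of `H(x,·)` implies (A6)₊ and (A6)₋. -/
theorem stmt_13 {n : ℕ} (H : E n → E n → ℝ)
    (hHc : ContH H) (hHp : PerH H) (hco : Coercive H)
    (hsc : ∀ (x p q : E n), p ≠ q → ∀ lam : ℝ, 0 < lam → lam < 1 →
      H x (lam • p + (1 - lam) • q) < lam * H x p + (1 - lam) * H x q) :
    A6plus H ∧ A6minus H := by
  have hconv : ∀ x, StrictConvexOn ℝ univ (H x) := fun x =>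
    ⟨convex_univ, fun p _ q _ hpq a b ha _ hab => by
      obtain rfl : b = 1 - a := by linarith
      exact hsc x p q hpq a ha (by linarith)⟩
  have hgap := fun {c θ : ℝ} (hc : c ≠ 0) (hθ : 1 < θ) =>
    exists_pos_forall_mul_add_le_apply_add_smul_sub hHc hHp hco hconv hc hθ
  refine ⟨⟨1, one_pos, 2, one_lt_two, fun η hη θ hθ => ?_⟩,
    ⟨1, one_pos, 2, one_lt_two, fun η hη θ hθ => ?_⟩⟩
  · exact hgap hη.1.ne' hθ.1
  · simpa only [neg_mul] using hgap (neg_ne_zero.mpr hη.1.ne') hθ.1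
end HJpaper
end
end

section
/- Let H ∈ C(ℝⁿ×ℝⁿ) satisfy condition (A)₋ with constant η₀ > 0 and function ν : (0,η₀) → (0,∞). Then H satisfies (A6)₋; more precisely, for every η ∈ (0,η₀), every θ > 1 and all x, p, q ∈ ℝⁿ with H(x,p) ≤ 0 and H(x,q) ≥ −η, one has H(x, p + θ(q−p)) ≥ −θη + ψ(η,θ), where ψ(η,θ) := (θ−1)·min{θ⁻¹ν(η), η} > 0. -/
noncomputable section

open Filter Set Topology

namespace HJpaper

/-- condition (A)₋ implies (A6)₋, with the explicit constant
`ψ(η,θ) = (θ-1) min{θ⁻¹ ν(η), η}`. -/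
theorem stmt_14 {n : ℕ} (H : E n → E n → ℝ) (hHc : ContH H)
    (η₀ : ℝ) (hη₀ : 0 < η₀) (ν : ℝ → ℝ)
    (hν : ∀ η : ℝ, 0 < η → η < η₀ → 0 < ν η)
    (hA : ∀ η : ℝ, 0 < η → η < η₀ → ∀ (x p q : E n) (lam : ℝ), 0 ≤ lam → lam ≤ 1 →
      H x q ≤ -η → H x p ≤ 0 →
      H x ((1 - lam) • p + lam • q) ≤ lam * H x q - ν η * (lam * (1 - lam))) :
    A6minus H ∧
    ∀ η : ℝ, 0 < η → η < η₀ → ∀ θ : ℝ, 1 < θ →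
      0 < (θ - 1) * min (θ⁻¹ * ν η) η ∧
      ∀ x p q : E n, H x p ≤ 0 → -η ≤ H x q →
        -(θ * η) + (θ - 1) * min (θ⁻¹ * ν η) η ≤ H x (p + θ • (q - p)) := by
  have key : ∀ η : ℝ, 0 < η → η < η₀ → ∀ θ : ℝ, 1 < θ →
      0 < (θ - 1) * min (θ⁻¹ * ν η) η ∧
      ∀ x p q : E n, H x p ≤ 0 → -η ≤ H x q →
        -(θ * η) + (θ - 1) * min (θ⁻¹ * ν η) η ≤ H x (p + θ • (q - p)) := by
    intro η hη hηη θ hθ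
    have hθ0 : (0:ℝ) < θ := lt_trans one_pos hθ
    have hν' := hν η hη hηη
    have hinv : θ⁻¹ * θ = 1 := inv_mul_cancel₀ (ne_of_gt hθ0)
    have hinvpos : 0 < θ⁻¹ := inv_pos.mpr hθ0
    have hmin : 0 < min (θ⁻¹ * ν η) η := lt_min (mul_pos hinvpos hν') hη
    refine ⟨mul_pos (by linarith) hmin, ?_⟩
    intro x p q hp hq
    set r : E n := p + θ • (q - p) with hr
    have hcomb : (1 - θ⁻¹) • p + θ⁻¹ • r = q := by
      rw [hr]
      match_scalars <;> (field_simp; try ring)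
    by_cases hcase : H x r ≤ -η
    · have h1 : θ⁻¹ ≤ 1 := by
        rw [inv_le_one_iff₀]; right; linarith
      have := hA η hη hηη x p r θ⁻¹ (le_of_lt hinvpos) h1 hcase hp
      rw [hcomb] at this
      have h2 : -η ≤ θ⁻¹ * H x r - ν η * (θ⁻¹ * (1 - θ⁻¹)) := le_trans hq this
      have h3 : min (θ⁻¹ * ν η) η ≤ θ⁻¹ * ν η := min_le_left _ _
      nlinarith [mul_le_mul_of_nonneg_left h2 (le_of_lt hθ0),
        mul_le_mul_of_nonneg_left h3 (by linarith : (0:ℝ) ≤ θ - 1)]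
    · push_neg at hcase
      have h3 : min (θ⁻¹ * ν η) η ≤ η := min_le_right _ _
      nlinarith [mul_le_mul_of_nonneg_left h3 (by linarith : (0:ℝ) ≤ θ - 1)]
  constructor
  · refine ⟨η₀, hη₀, 2, one_lt_two, ?_⟩
    intro η hη θ hθ
    obtain ⟨hpos, hbd⟩ := key η hη.1 hη.2 θ hθ.1
    refine ⟨(θ - 1) * min (θ⁻¹ * ν η) η, hpos, ?_⟩
    intro x p q hp hq
    have := hbd x p q hp hq
    linarith [this]
  · exact key
end HJpaper
end
end
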